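/- The series Z(z) = ∑_{n≥0} z^n/(q;q)_n · ∏_{i=2}^{N} φ(q^{n+1} b_i) / φ(q^{rn+1} c), as a formal power series in z over ℂ, satisfies the q-difference equation [∏_{i=1}^{N}(1 - a_i T_z) - z ∏_{k=0}^{r-1}(1 - q^{k+1} a_N^{-1} T_z^r)] (θ(z^{-1})/θ(a_1^{-1}z^{-1}) · Z(z)) = 0 in the special case a_1 = 1: equivalently, with a_1 = 1 and b_i = a_i, c = a_N^{-1}, the coefficients satisfy the recursion ∏_{i=1}^{N}(1 - a_i q^n) · A_n = ∏_{k=0}^{r-1}(1 - q^{k + r(n-1) + 1} a_N^{-1}) · A_{n-1}, where A_n = ∏_{i=2}^N φ(q^{n+1}a_i)/((q;q)_n φ(q^{rn+1}a_N^{-1})). -/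

import Mathlib

open Complex Filter

noncomputable def phi (q x : ℂ) : ℂ := ∏' i : ℕ, (1 - q ^ i * x)

noncomputable def theta (q x : ℂ) : ℂ :=
  ∏' i : ℕ, ((1 - q ^ i * x) * (1 - q ^ (i + 1) / x))

/-- The coefficient `A_n = ∏_{i=2}^N φ(q^{n+1} a_i) / ((q;q)_n · φ(q^{rn+1} a_N⁻¹))`. -/
noncomputable def coeffA (q : ℂ) (a : ℕ → ℂ) (N r n : ℕ) : ℂ :=
  (∏ i ∈ Finset.Icc 2 N, phi q (q ^ (n + 1) * a i)) /
    ((∏ k ∈ Finset.Icc 1 n, (1 - q ^ k)) * phi q (q ^ (r * n + 1) * (a N)⁻¹))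

lemma multipliable_phi {q : ℂ} (hq : ‖q‖ < 1) (x : ℂ) :
    Multipliable fun i : ℕ => 1 - q ^ i * x := by
  by_cases h : ∀ i : ℕ, 1 - q ^ i * x ≠ 0
  · have hs : Summable fun n : ℕ => Complex.log (1 - q ^ n * x) := by
      have hgeo : Summable fun n : ℕ => (3 / 2 : ℝ) * (‖q‖ ^ n * ‖x‖) :=
        (((summable_geometric_of_lt_one (norm_nonneg q) hq).mul_right
          (‖x‖)).mul_left _)
      refine Summable.of_norm_bounded_eventually_nat hgeo ?_
      have htend : Tendsto (fun n : ℕ => ‖q‖ ^ n * ‖x‖) atTop (nhds 0) := by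
        simpa using (tendsto_pow_atTop_nhds_zero_of_lt_one (norm_nonneg q) hq).mul_const
          (‖x‖)
      have hev : ∀ᶠ n : ℕ in atTop, ‖q‖ ^ n * ‖x‖ ≤ 1 / 2 := by
        filter_upwards [htend.eventually (eventually_le_nhds (by norm_num : (0:ℝ) < 1/2))]
          with n hn using hn
      filter_upwards [hev] with n hn
      have hz : ‖-(q ^ n * x)‖ ≤ 1 / 2 := by
        simpa [norm_neg, map_mul, map_pow] using hn
      have := Complex.norm_log_one_add_half_le_self hz
      rw [show (1 : ℂ) + -(q ^ n * x) = 1 - q ^ n * x by ring] at this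
      calc ‖Complex.log (1 - q ^ n * x)‖ ≤ 3 / 2 * ‖-(q ^ n * x)‖ := this
        _ = 3 / 2 * (‖q‖ ^ n * ‖x‖) := by
            simp [norm_neg, map_mul, map_pow]
    exact Complex.multipliable_of_summable_log hs
  · push_neg at h
    obtain ⟨i0, hi0⟩ := h
    refine ⟨0, ?_⟩
    have hev : ∀ᶠ s : Finset ℕ in atTop, ∏ i ∈ s, (1 - q ^ i * x) = 0 := by
      filter_upwards [eventually_ge_atTop ({i0} : Finset ℕ)] with s hs
      exact Finset.prod_eq_zero (hs (Finset.mem_singleton_self i0)) hi0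
    exact tendsto_const_nhds.congr' (hev.mono fun s hs => hs.symm)

set_option maxHeartbeats 1000000 in
lemma phi_succ {q : ℂ} (hq : ‖q‖ < 1) (x : ℂ) :
    phi q x = (1 - x) * phi q (q * x) := by
  have hm : Multipliable fun n : ℕ => 1 - q ^ (n + 1) * x :=
    (multipliable_phi hq (q * x)).congr fun b => by rw [pow_succ]; ring
  have h := tprod_eq_zero_mul' (f := fun n : ℕ => 1 - q ^ n * x) hm
  simp only [pow_zero, one_mul] at h
  unfold phi
  rw [h]
  congr 1
  exact tprod_congr fun b => by rw [pow_succ]; ring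

lemma phi_pow {q : ℂ} (hq : ‖q‖ < 1) (x : ℂ) (m : ℕ) :
    phi q x = (∏ k ∈ Finset.range m, (1 - q ^ k * x)) * phi q (q ^ m * x) := by
  induction m with
  | zero => simp
  | succ m ih =>
      rw [ih, phi_succ hq (q ^ m * x), Finset.prod_range_succ,
        show q * (q ^ m * x) = q ^ (m + 1) * x by ring]
      ring

theorem qde_coefficient_recursion (q : ℂ) (a : ℕ → ℂ) (N r n : ℕ)
    (hq0 : 0 < ‖q‖) (hq1 : ‖q‖ < 1)
    (hN : 1 ≤ N) (hr : 1 ≤ r) (hn : 1 ≤ n)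
    (ha1 : a 1 = 1) (ha : ∀ i ∈ Finset.Icc 1 N, a i ≠ 0)
    (hden : ∀ m : ℕ,
      (∏ k ∈ Finset.Icc 1 m, (1 - q ^ k)) * phi q (q ^ (r * m + 1) * (a N)⁻¹) ≠ 0) :
    (∏ i ∈ Finset.Icc 1 N, (1 - a i * q ^ n)) * coeffA q a N r n =
      (∏ k ∈ Finset.range r, (1 - q ^ (k + r * (n - 1) + 1) * (a N)⁻¹)) *
        coeffA q a N r (n - 1) := by
  obtain ⟨m, rfl⟩ : ∃ m, n = m + 1 := ⟨n - 1, (Nat.succ_pred_eq_of_pos hn).symm⟩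
  simp only [Nat.add_sub_cancel]
  -- notation
  set Qm := ∏ k ∈ Finset.Icc 1 m, (1 - q ^ k) with hQm
  set Rn := phi q (q ^ (r * (m + 1) + 1) * (a N)⁻¹) with hRn
  set Rm := phi q (q ^ (r * m + 1) * (a N)⁻¹) with hRm
  set Pn := ∏ i ∈ Finset.Icc 2 N, phi q (q ^ (m + 1 + 1) * a i) with hPn
  set C := ∏ k ∈ Finset.range r, (1 - q ^ (k + r * m + 1) * (a N)⁻¹) with hC
  -- split the index-1 factor
  have hsplit : Finset.Icc 1 N = insert 1 (Finset.Icc 2 N) := by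
    ext i; simp [Finset.mem_Icc, Finset.mem_insert]; omega
  have hQ : ∏ k ∈ Finset.Icc 1 (m + 1), (1 - q ^ k) = Qm * (1 - q ^ (m + 1)) :=
    Finset.prod_Icc_succ_top (by omega) _
  have hP : ∏ i ∈ Finset.Icc 2 N, phi q (q ^ (m + 1) * a i) =
      (∏ i ∈ Finset.Icc 2 N, (1 - a i * q ^ (m + 1))) * Pn := by
    rw [hPn, ← Finset.prod_mul_distrib]
    refine Finset.prod_congr rfl fun i _ => ?_
    rw [phi_succ hq1 (q ^ (m + 1) * a i),
      show q * (q ^ (m + 1) * a i) = q ^ (m + 1 + 1) * a i by ring]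
    ring
  have hRrel : Rm = C * Rn := by
    rw [hRm, phi_pow hq1 _ r, hRn, hC]
    congr 1
    · refine Finset.prod_congr rfl fun k _ => ?_
      rw [show k + r * m + 1 = k + (r * m + 1) by omega, pow_add]
      ring
    · rw [show r * (m + 1) + 1 = r + (r * m + 1) by ring, pow_add]
      ring
  have hd1 := hden (m + 1)
  rw [hQ, ← hRn] at hd1
  have hd0 := hden m
  rw [← hRm] at hd0
  rw [hRrel] at hd0
  have hQm0 : Qm ≠ 0 := fun h => hd1 (by rw [h]; ring)
  have h1q : (1 - q ^ (m + 1)) ≠ 0 := fun h => hd1 (by rw [h]; ring)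
  have hRn0 : Rn ≠ 0 := fun h => hd1 (by rw [h]; ring)
  -- main computation
  rw [coeffA, coeffA, hsplit, Finset.prod_insert (by simp), ha1, one_mul, hQ, hP, ← hRn, ← hRm,
    hRrel]
  have hC0 : C ≠ 0 := fun h => hd0 (by rw [h]; ring)
  have hQm0' : (∏ k ∈ Finset.Icc 1 m, (1 - q ^ k)) ≠ 0 := hQm0
  field_simp
  ring
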